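/- Let P ∈ ℝ^{n×n} be symmetric positive definite and c ∈ ℝⁿ, and let ℓ* := sup { ℓ_{c,P}(β) : β ∈ I_P }. Then E(c,P) is contained in the topological interior of B(0,1) (i.e., xᵀx < 1 for every x ∈ E(c,P)) if and only if ℓ* > −1. -/

import Mathlib

open Matrix

noncomputable section

/-- The ellipsoid with center `c` and shape matrix `P`. -/
def Ellipsoid {n : ℕ} (c : Fin n → ℝ) (P : Matrix (Fin n) (Fin n) ℝ) : Set (Fin n → ℝ) :=
  {x | (x - c) ⬝ᵥ P.mulVec (x - c) ≤ 1}

/-- The closed Euclidean unit ball `B(0,1) = {x | xᵀx ≤ 1}`. -/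
def UnitBall (n : ℕ) : Set (Fin n → ℝ) :=
  {x | x ⬝ᵥ x ≤ 1}

open Classical in
/-- The dual function `ℓ_{c,P}(β) = −β − Σ_{i : c̄ᵢ ≠ 0} c̄ᵢ² λᵢβ/(λᵢβ−1)`,
expressed via the eigenvalues `λ` of `P` and the coordinates `c̄ = Vᵀc` of the center
in an orthonormal eigenbasis of `P`. -/
def ellFun {n : ℕ} (lam cbar : Fin n → ℝ) (β : ℝ) : ℝ :=
  -β - ∑ i ∈ Finset.univ.filter (fun i => cbar i ≠ 0),
    (cbar i) ^ 2 * (lam i * β / (lam i * β - 1))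

open Classical in
/-- The domain `I_P` of the dual function: `(1/λ_min, ∞)` if some `i` in the support
of `c̄` achieves `λ_min`, and `[1/λ_min, ∞)` otherwise. -/
def ellDom {n : ℕ} (lam cbar : Fin n → ℝ) (lammin : ℝ) : Set ℝ :=
  if ∃ i, cbar i ≠ 0 ∧ lam i = lammin then Set.Ioi (1 / lammin) else Set.Ici (1 / lammin)


/-!
Rotating by `Vᵀ` makes the ellipsoid axis-parallel, `{y | ∑ λᵢ (yᵢ - c̄ᵢ)² ≤ 1}`, and `-ℓ` is the
Lagrangian dual of maximising `‖y‖²` over it. Completing the square coordinatewise gives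
`‖y‖² ≤ -ℓ(β) + β (∑ λᵢ (yᵢ - c̄ᵢ)² - 1)` for `β ∈ I_P`, so `ℓ(β) > -1` puts the ellipsoid inside
the open ball. Conversely there is no duality gap: `ℓ'(β) = s(β) - 1` with
`s(β) = ∑ c̄ᵢ² λᵢ / (λᵢ β - 1)²` decreasing to `0`. If `s` reaches `1` on `I_P` (it must when `I_P`
is open, since `s` then blows up at `1/λ_min`), the stationary point gives a point of the ellipsoid
with `‖y‖² = -ℓ(β)`. Otherwise `I_P` is closed, and at `β = 1/λ_min` the slack `1 - s(β)` can be
spent on a coordinate `j` with `c̄ⱼ = 0` and `λⱼ = λ_min`, again reaching `‖y‖² = -ℓ(β)`.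
-/

open Filter Topology

theorem dotProduct_self_eq_norm_toLp_sq {n : ℕ} (x : Fin n → ℝ) :
    x ⬝ᵥ x = ‖WithLp.toLp 2 x‖ ^ 2 := by
  rw [← real_inner_self_eq_norm_sq, EuclideanSpace.inner_toLp_toLp, star_trivial]

theorem interior_unitBall (n : ℕ) : interior (UnitBall n) = {x | x ⬝ᵥ x < 1} := by
  set e := (EuclideanSpace.equiv (Fin n) ℝ).symm
  have hball : UnitBall n = e ⁻¹' Metric.closedBall 0 1 := by
    ext x
    simp [e, UnitBall, dotProduct_self_eq_norm_toLp_sq, sq_le_one_iff₀ (norm_nonneg _)]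
  rw [hball, ← e.isOpenMap.preimage_interior_eq_interior_preimage e.continuous]
  ext x
  simp [e, interior_closedBall _ one_ne_zero, dotProduct_self_eq_norm_toLp_sq,
    sq_lt_one_iff₀ (norm_nonneg _)]

theorem mem_ellipsoid_conj_iff {n : ℕ} (V D : Matrix (Fin n) (Fin n) ℝ) (c x : Fin n → ℝ) :
    x ∈ Ellipsoid c (V * D * Vᵀ) ↔ Vᵀ *ᵥ x ∈ Ellipsoid (Vᵀ *ᵥ c) D := by
  simp only [Ellipsoid, Set.mem_ofPred_eq, ← mulVec_sub, ← mulVec_mulVec,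
    dotProduct_mulVec (x - c) V, ← mulVec_transpose]

theorem mem_ellipsoid_diagonal_iff {n : ℕ} (lam c x : Fin n → ℝ) :
    x ∈ Ellipsoid c (diagonal lam) ↔ ∑ i, lam i * (x i - c i) ^ 2 ≤ 1 := by
  simp only [Ellipsoid, Set.mem_ofPred_eq, dotProduct, mulVec_diagonal, Pi.sub_apply]
  exact iff_of_eq (congrArg (· ≤ 1) (Finset.sum_congr rfl fun i _ => by ring))

theorem transpose_mulVec_dotProduct_self {n : ℕ} {V : Matrix (Fin n) (Fin n) ℝ} (hV : V * Vᵀ = 1)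
    (x : Fin n → ℝ) : (Vᵀ *ᵥ x) ⬝ᵥ (Vᵀ *ᵥ x) = x ⬝ᵥ x := by
  rw [dotProduct_mulVec, vecMul_transpose, mulVec_mulVec, hV, one_mulVec]

theorem ellipsoid_conj_subset_interior_unitBall_iff {n : ℕ} {V : Matrix (Fin n) (Fin n) ℝ}
    (hV : Vᵀ * V = 1) (D : Matrix (Fin n) (Fin n) ℝ) (c : Fin n → ℝ) :
    Ellipsoid c (V * D * Vᵀ) ⊆ interior (UnitBall n) ↔
      Ellipsoid (Vᵀ *ᵥ c) D ⊆ interior (UnitBall n) := by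
  have hV' : V * Vᵀ = 1 := mul_eq_one_comm.mp hV
  simp only [interior_unitBall, Set.subset_def, Set.mem_ofPred_eq, mem_ellipsoid_conj_iff]
  constructor
  · intro h y hy
    have hy' : Vᵀ *ᵥ (V *ᵥ y) = y := by rw [mulVec_mulVec, hV, one_mulVec]
    rw [← hy'] at hy ⊢
    rw [transpose_mulVec_dotProduct_self hV']
    exact h _ hy
  · intro h x hx
    rw [← transpose_mulVec_dotProduct_self hV']
    exact h _ hx

theorem posDef_of_posDef_conj {n : ℕ} {V D : Matrix (Fin n) (Fin n) ℝ} (hV : Vᵀ * V = 1)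
    (hP : (V * D * Vᵀ).PosDef) : D.PosDef := by
  have hinj : Function.Injective V.mulVec := fun x y h => by
    simpa [mulVec_mulVec, hV] using congrArg (Vᵀ *ᵥ ·) h
  have hconj : Vᵀ * (V * D * Vᵀ) * V = D := by
    simp only [← Matrix.mul_assoc, hV, Matrix.one_mul]
    rw [Matrix.mul_assoc, hV, Matrix.mul_one]
  simpa only [conjTranspose_eq_transpose_of_trivial, hconj] using hP.conjTranspose_mul_mul_same hinj

theorem ellFun_eq_sum {n : ℕ} (lam b : Fin n → ℝ) (β : ℝ) :
    ellFun lam b β = -β - ∑ i, b i ^ 2 * (lam i * β / (lam i * β - 1)) := by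
  rw [ellFun, Finset.sum_filter_of_ne fun i _ h => ?_]
  rintro hb
  simp [hb] at h

theorem sq_le_mul_sub_sq_add {L y b : ℝ} (hL : 1 ≤ L) (hb : b ≠ 0 → 1 < L) :
    y ^ 2 ≤ L * (y - b) ^ 2 + b ^ 2 * (L / (L - 1)) := by
  rcases eq_or_ne b 0 with rfl | hb0
  · norm_num
    nlinarith [sq_nonneg y]
  · have hL1 : 0 < L - 1 := sub_pos.2 (hb hb0)
    have key : L * (y - b) ^ 2 + b ^ 2 * (L / (L - 1)) - y ^ 2 =
        ((L - 1) * y - L * b) ^ 2 / (L - 1) := by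
      field_simp
      ring
    nlinarith [div_nonneg (sq_nonneg ((L - 1) * y - L * b)) hL1.le]

section Domain

variable {n : ℕ} {lam b : Fin n → ℝ} {lammin β : ℝ}

theorem mem_ellDom_of_le {β' : ℝ} (hβ : β ∈ ellDom lam b lammin) (hle : β ≤ β') :
    β' ∈ ellDom lam b lammin := by
  unfold ellDom at *
  split_ifs at * with h
  exacts [lt_of_lt_of_le hβ hle, le_trans hβ hle]

theorem le_of_mem_ellDom (hβ : β ∈ ellDom lam b lammin) : 1 / lammin ≤ β := by
  unfold ellDom at hβ
  split_ifs at hβ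
  exacts [le_of_lt hβ, hβ]

variable (hpos : 0 < lammin) (hmin : ∀ i, lammin ≤ lam i)
include hpos

theorem pos_of_mem_ellDom (hβ : β ∈ ellDom lam b lammin) : 0 < β :=
  lt_of_lt_of_le (by positivity) (le_of_mem_ellDom hβ)

include hmin

theorem one_le_mul_of_mem_ellDom (hβ : β ∈ ellDom lam b lammin) (i : Fin n) : 1 ≤ lam i * β := by
  have h := (div_le_iff₀ hpos).1 (le_of_mem_ellDom hβ)
  nlinarith [hmin i, pos_of_mem_ellDom hpos hβ]

theorem one_lt_mul_of_mem_ellDom (hβ : β ∈ ellDom lam b lammin) {i : Fin n} (hi : b i ≠ 0) :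
    1 < lam i * β := by
  have hβ0 := pos_of_mem_ellDom hpos hβ
  rcases (hmin i).lt_or_eq with hlt | heq
  · nlinarith [(div_le_iff₀ hpos).1 (le_of_mem_ellDom hβ)]
  · rw [ellDom, if_pos ⟨i, hi, heq.symm⟩] at hβ
    rw [← heq]
    exact (div_lt_iff₀' hpos).1 hβ

end Domain

section WeakDuality

variable {n : ℕ} {lam b : Fin n → ℝ} {lammin : ℝ} (hpos : 0 < lammin) (hmin : ∀ i, lammin ≤ lam i)
include hpos hmin

theorem ellFun_le_neg (β : ℝ) (hβ : β ∈ ellDom lam b lammin) : ellFun lam b β ≤ -β := by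
  rw [ellFun_eq_sum, sub_le_iff_le_add, le_add_iff_nonneg_right]
  exact Finset.sum_nonneg fun i _ => mul_nonneg (sq_nonneg _) <| div_nonneg
    (by linarith [one_le_mul_of_mem_ellDom hpos hmin hβ i])
    (sub_nonneg.2 (one_le_mul_of_mem_ellDom hpos hmin hβ i))

theorem lt_sSup_ellFun_iff (a : ℝ) :
    a < sSup (ellFun lam b '' ellDom lam b lammin) ↔
      ∃ β ∈ ellDom lam b lammin, a < ellFun lam b β := by
  have hne : 1 / lammin + 1 ∈ ellDom lam b lammin := by
    unfold ellDom; split_ifs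
    exacts [lt_add_one (1 / lammin), (lt_add_one (1 / lammin)).le]
  have hbdd : BddAbove (ellFun lam b '' ellDom lam b lammin) := by
    refine ⟨0, ?_⟩
    rintro _ ⟨β, hβ, rfl⟩
    linarith [ellFun_le_neg hpos hmin β hβ, pos_of_mem_ellDom hpos hβ]
  rw [lt_csSup_iff hbdd ⟨_, Set.mem_image_of_mem _ hne⟩, Set.exists_mem_image]

theorem dotProduct_self_le_of_mem_ellDom {β : ℝ} (hβ : β ∈ ellDom lam b lammin) (y : Fin n → ℝ) :
    y ⬝ᵥ y ≤ -ellFun lam b β + β * (∑ i, lam i * (y i - b i) ^ 2 - 1) := by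
  have h := Finset.sum_le_sum fun i (_ : i ∈ Finset.univ) => sq_le_mul_sub_sq_add (y := y i)
    (one_le_mul_of_mem_ellDom hpos hmin hβ i) (one_lt_mul_of_mem_ellDom hpos hmin hβ)
  have hβsum : ∑ i, lam i * β * (y i - b i) ^ 2 = β * ∑ i, lam i * (y i - b i) ^ 2 := by
    rw [Finset.mul_sum]
    exact Finset.sum_congr rfl fun i _ => by ring
  have hdot : y ⬝ᵥ y = ∑ i, y i ^ 2 := by simp only [dotProduct, sq]
  rw [Finset.sum_add_distrib, hβsum] at h
  rw [hdot, ellFun_eq_sum]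
  linarith

end WeakDuality

section PrimalPoint

variable {n : ℕ} (lam b : Fin n → ℝ)

-- `ℓ'(β) = dualSlope lam b β - 1`
def dualSlope (β : ℝ) : ℝ :=
  ∑ i, b i ^ 2 * (lam i / (lam i * β - 1) ^ 2)

-- the maximiser of `yᵢ ^ 2 - λᵢ β (yᵢ - bᵢ) ^ 2` when `λᵢ β > 1`
def primalPoint (β : ℝ) : Fin n → ℝ :=
  fun i => lam i * β * b i / (lam i * β - 1)

theorem continuousOn_dualSlope {s : Set ℝ} (hs : ∀ β ∈ s, ∀ i, b i ≠ 0 → lam i * β ≠ 1) :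
    ContinuousOn (dualSlope lam b) s := by
  refine continuousOn_finsetSum _ fun i _ => ?_
  rcases eq_or_ne (b i) 0 with hb | hb
  · simpa [hb] using continuousOn_const
  · exact continuousOn_const.mul <| continuousOn_const.div (by fun_prop)
      fun β hβ => pow_ne_zero 2 (sub_ne_zero.2 (hs β hβ i hb))

theorem tendsto_dualSlope_atTop (hlam : ∀ i, 0 < lam i) :
    Tendsto (dualSlope lam b) atTop (𝓝 0) := by
  have hden (i : Fin n) : Tendsto (fun β => (lam i * β - 1) ^ 2) atTop atTop :=
    (tendsto_pow_atTop two_ne_zero).comp <| tendsto_atTop_add_const_right _ (-1) <|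
      tendsto_id.const_mul_atTop (hlam i)
  unfold dualSlope
  simpa using tendsto_finsetSum Finset.univ fun i _ =>
    (tendsto_const_nhds.div_atTop (hden i)).const_mul (b i ^ 2)

variable {lam b} {β : ℝ} (hβ : ∀ i, b i ≠ 0 → lam i * β ≠ 1)
include hβ

theorem sum_primalPoint_sub_sq :
    ∑ i, lam i * (primalPoint lam b β i - b i) ^ 2 = dualSlope lam b β := by
  refine Finset.sum_congr rfl fun i _ => ?_
  rcases eq_or_ne (b i) 0 with hb | hb
  · simp [primalPoint, hb]
  · have := sub_ne_zero.2 (hβ i hb)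
    simp only [primalPoint]
    field_simp
    ring

theorem primalPoint_dotProduct_self :
    primalPoint lam b β ⬝ᵥ primalPoint lam b β = -ellFun lam b β - β + β * dualSlope lam b β := by
  rw [ellFun_eq_sum, dualSlope, Finset.mul_sum,
    show ∀ x y : ℝ, -(-β - x) - β + y = x + y from fun _ _ => by ring, ← Finset.sum_add_distrib]
  unfold dotProduct
  refine Finset.sum_congr rfl fun i _ => ?_
  rcases eq_or_ne (b i) 0 with hb | hb
  · simp [primalPoint, hb]
  · have := sub_ne_zero.2 (hβ i hb)
    simp only [primalPoint]
    field_simp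
    ring

theorem primalPoint_mem_ellipsoid (hg : dualSlope lam b β = 1) :
    primalPoint lam b β ∈ Ellipsoid b (diagonal lam) := by
  rw [mem_ellipsoid_diagonal_iff, sum_primalPoint_sub_sq hβ, hg]

theorem exists_mem_ellipsoid_dotProduct_self_eq_of_dualSlope_le_one (hβ0 : 0 ≤ β)
    (hg : dualSlope lam b β ≤ 1) {j : Fin n} (hbj : b j = 0) (hj : lam j * β ≤ 1) :
    ∃ y ∈ Ellipsoid b (diagonal lam), y ⬝ᵥ y = -ellFun lam b β := by
  -- the slack `1 - dualSlope` of the constraint is spent on the free coordinate `j`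
  set t := √(β * (1 - dualSlope lam b β))
  have ht : t ^ 2 = β * (1 - dualSlope lam b β) := Real.sq_sqrt (mul_nonneg hβ0 (sub_nonneg.2 hg))
  set y := Function.update (primalPoint lam b β) j t
  have hy0 : primalPoint lam b β j = 0 := by simp [primalPoint, hbj]
  have hsub (i : Fin n) : lam i * (y i - b i) ^ 2 =
      lam i * (primalPoint lam b β i - b i) ^ 2 + if i = j then lam j * t ^ 2 else 0 := by
    rcases eq_or_ne i j with rfl | hij
    · simp [y, hy0, hbj]
    · simp [y, hij]
  have hsq (i : Fin n) : y i * y i =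
      primalPoint lam b β i * primalPoint lam b β i + if i = j then t ^ 2 else 0 := by
    rcases eq_or_ne i j with rfl | hij
    · simp [y, hy0, sq]
    · simp [y, hij]
  refine ⟨y, ?_, ?_⟩
  · rw [mem_ellipsoid_diagonal_iff, Finset.sum_congr rfl fun i _ => hsub i, Finset.sum_add_distrib,
      sum_primalPoint_sub_sq hβ, Finset.sum_ite_eq' Finset.univ j, if_pos (Finset.mem_univ j), ht]
    nlinarith [sub_nonneg.2 hg]
  · rw [dotProduct, Finset.sum_congr rfl fun i _ => hsq i, Finset.sum_add_distrib, ← dotProduct,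
      primalPoint_dotProduct_self hβ, Finset.sum_ite_eq' Finset.univ j, if_pos (Finset.mem_univ j),
      ht]
    ring

end PrimalPoint

section StrongDuality

variable {n : ℕ} {lam b : Fin n → ℝ} {lammin : ℝ} (hpos : 0 < lammin) (hmin : ∀ i, lammin ≤ lam i)
include hpos hmin

theorem exists_dualSlope_eq_one {β₁ : ℝ} (hβ₁ : β₁ ∈ ellDom lam b lammin)
    (hg : 1 ≤ dualSlope lam b β₁) : ∃ β ∈ ellDom lam b lammin, dualSlope lam b β = 1 := by
  have hlam (i : Fin n) : 0 < lam i := hpos.trans_le (hmin i)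
  obtain ⟨β₂, hg₂, hle⟩ := ((tendsto_dualSlope_atTop lam b hlam).eventually
    (ge_mem_nhds zero_lt_one)).and (eventually_ge_atTop β₁) |>.exists
  have hcont : ContinuousOn (dualSlope lam b) (Set.Icc β₁ β₂) := continuousOn_dualSlope lam b
    fun β hβ i hb => (one_lt_mul_of_mem_ellDom hpos hmin (mem_ellDom_of_le hβ₁ hβ.1) hb).ne'
  obtain ⟨β, hβ, hgβ⟩ := intermediate_value_Icc' hle hcont ⟨hg₂, hg⟩
  exact ⟨β, mem_ellDom_of_le hβ₁ hβ.1, hgβ⟩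

theorem exists_one_le_dualSlope {i₀ : Fin n} (hb : b i₀ ≠ 0) (hi₀ : lam i₀ = lammin) :
    ∃ β ∈ ellDom lam b lammin, 1 ≤ dualSlope lam b β := by
  -- so that the `i₀`-term of the slope at `(1 + δ) / lammin` is `b i₀ ^ 2 * lammin / δ ^ 2 = 1`
  set δ := √(b i₀ ^ 2 * lammin)
  have hδ : 0 < δ := Real.sqrt_pos.2 (by positivity)
  have hδsq : δ ^ 2 = b i₀ ^ 2 * lammin := Real.sq_sqrt (by positivity)
  have hdom : (1 + δ) / lammin ∈ ellDom lam b lammin := by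
    rw [ellDom, if_pos ⟨i₀, hb, hi₀⟩]
    exact div_lt_div_of_pos_right (by linarith) hpos
  refine ⟨_, hdom, ?_⟩
  have hterm : b i₀ ^ 2 * (lam i₀ / (lam i₀ * ((1 + δ) / lammin) - 1) ^ 2) = 1 := by
    rw [hi₀, mul_div_cancel₀ _ hpos.ne', add_sub_cancel_left, hδsq]
    field_simp
  refine hterm.symm.le.trans ?_
  exact Finset.single_le_sum
    (f := fun i => b i ^ 2 * (lam i / (lam i * ((1 + δ) / lammin) - 1) ^ 2))
    (fun i _ => by have := hpos.trans_le (hmin i); positivity) (Finset.mem_univ i₀)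

theorem exists_mem_ellipsoid_dotProduct_self_eq_neg_ellFun (hex : ∃ i, lam i = lammin) :
    ∃ β ∈ ellDom lam b lammin, ∃ y ∈ Ellipsoid b (diagonal lam), y ⬝ᵥ y = -ellFun lam b β := by
  by_cases h : ∃ β ∈ ellDom lam b lammin, 1 ≤ dualSlope lam b β
  · obtain ⟨β₁, hβ₁, hg₁⟩ := h
    obtain ⟨β, hβ, hg⟩ := exists_dualSlope_eq_one hpos hmin hβ₁ hg₁
    have hβ' (i : Fin n) (hb : b i ≠ 0) : lam i * β ≠ 1 :=
      (one_lt_mul_of_mem_ellDom hpos hmin hβ hb).ne'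
    refine ⟨β, hβ, _, primalPoint_mem_ellipsoid hβ' hg, ?_⟩
    rw [primalPoint_dotProduct_self hβ', hg]
    ring
  · push Not at h
    have hA : ¬ ∃ i, b i ≠ 0 ∧ lam i = lammin := fun ⟨i, hb, hi⟩ =>
      let ⟨β, hβ, hg⟩ := exists_one_le_dualSlope hpos hmin hb hi
      (h β hβ).not_ge hg
    have hβ₀ : 1 / lammin ∈ ellDom lam b lammin := by
      rw [ellDom, if_neg hA]
      exact Set.mem_Ici.2 le_rfl
    obtain ⟨j, hj⟩ := hex
    have hbj : b j = 0 := by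
      by_contra hb
      exact hA ⟨j, hb, hj⟩
    exact ⟨_, hβ₀, exists_mem_ellipsoid_dotProduct_self_eq_of_dualSlope_le_one
      (fun i hb => (one_lt_mul_of_mem_ellDom hpos hmin hβ₀ hb).ne') (by positivity) (h _ hβ₀).le
      hbj (by rw [hj, mul_one_div_cancel hpos.ne'])⟩

theorem ellipsoid_diagonal_subset_iff (hex : ∃ i, lam i = lammin) :
    Ellipsoid b (diagonal lam) ⊆ {x | x ⬝ᵥ x < 1} ↔
      ∃ β ∈ ellDom lam b lammin, -1 < ellFun lam b β := by
  constructor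
  · intro h
    obtain ⟨β, hβ, y, hy, hyy⟩ := exists_mem_ellipsoid_dotProduct_self_eq_neg_ellFun hpos hmin hex
    exact ⟨β, hβ, by linarith [show y ⬝ᵥ y < 1 from h hy]⟩
  · rintro ⟨β, hβ, hℓ⟩ y hy
    have hlag := dotProduct_self_le_of_mem_ellDom hpos hmin hβ y
    rw [mem_ellipsoid_diagonal_iff] at hy
    show y ⬝ᵥ y < 1
    nlinarith [pos_of_mem_ellDom hpos hβ]

end StrongDuality

theorem stmt_11 {n : ℕ} (P V D : Matrix (Fin n) (Fin n) ℝ) (lam : Fin n → ℝ)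
    (c : Fin n → ℝ) (hP : P.PosDef)
    (hV : Vᵀ * V = 1) (hD : D = Matrix.diagonal lam) (hdec : P = V * D * Vᵀ)
    (lammin : ℝ) (hmin : ∀ i, lammin ≤ lam i) (hex : ∃ i, lam i = lammin) :
    Ellipsoid c P ⊆ interior (UnitBall n) ↔
      sSup (ellFun lam (Vᵀ.mulVec c) '' ellDom lam (Vᵀ.mulVec c) lammin) > -1 := by
  subst hdec hD
  have hlam : ∀ i, 0 < lam i := posDef_diagonal_iff.mp (posDef_of_posDef_conj hV hP)
  have hpos : 0 < lammin := by
    obtain ⟨i, hi⟩ := hex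
    exact hi ▸ hlam i
  rw [ellipsoid_conj_subset_interior_unitBall_iff hV, interior_unitBall, gt_iff_lt,
    lt_sSup_ellFun_iff hpos hmin]
  exact ellipsoid_diagonal_subset_iff hpos hmin hex
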